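/- arXiv:1904.12810 — 5 statements merged into one kernel-verified Lean document; each statement's English description precedes it below -/
import Mathlib

section
/- Let C be a real symmetric positive definite 2N×2N matrix. Then Ċ is symmetric positive definite and commutes with J (equivalently, Ċ ∈ 𝒢), while C̈ is symmetric and satisfies J·C̈·Jᵀ = −C̈. -/
open Matrix

/-- The block matrix `J = [[0, -I],[I, 0]]`. -/
def J (N : ℕ) : Matrix (Fin N ⊕ Fin N) (Fin N ⊕ Fin N) ℝ :=
  Matrix.fromBlocks 0 (-1) 1 0

/-- A real `2N × 2N` matrix has the block form `[[G₁, -G₂],[G₂, G₁]]`. -/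
def blockForm {N : ℕ} (G : Matrix (Fin N ⊕ Fin N) (Fin N ⊕ Fin N) ℝ) : Prop :=
  ∃ G₁ G₂ : Matrix (Fin N) (Fin N) ℝ, G = Matrix.fromBlocks G₁ (-G₂) G₂ G₁

/-- The proper part `Ċ` of a real `2N × 2N` matrix `C` with blocks `[[A, B],[B′, D]]`:
`Ċ = (1/2)·[[A+D, B−B′],[B′−B, A+D]]`. -/
noncomputable def dotPart {N : ℕ} (C : Matrix (Fin N ⊕ Fin N) (Fin N ⊕ Fin N) ℝ) :
    Matrix (Fin N ⊕ Fin N) (Fin N ⊕ Fin N) ℝ :=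
  (1/2 : ℝ) • Matrix.fromBlocks (C.toBlocks₁₁ + C.toBlocks₂₂) (C.toBlocks₁₂ - C.toBlocks₂₁)
    (C.toBlocks₂₁ - C.toBlocks₁₂) (C.toBlocks₁₁ + C.toBlocks₂₂)

/-- The improper part `C̈ = C − Ċ`. -/
noncomputable def ddotPart {N : ℕ} (C : Matrix (Fin N ⊕ Fin N) (Fin N ⊕ Fin N) ℝ) :
    Matrix (Fin N ⊕ Fin N) (Fin N ⊕ Fin N) ℝ :=
  C - dotPart C

/-! `Ċ = (C + J C Jᵀ)/2` and `C̈ = (C - J C Jᵀ)/2`. Conjugation by the orthogonal matrix `J`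
preserves symmetry and positive semidefiniteness, whence `Ċ` is positive definite, and it is an
involution because `J² = -1`, whence it negates `C̈`. -/

section J

variable {N : ℕ}

lemma J_transpose_eq_neg : (J N)ᵀ = -J N :=
  Matrix.J_transpose (Fin N) ℝ

lemma J_mul_self : J N * J N = -1 :=
  Matrix.J_squared (Fin N) ℝ

lemma J_mul_mul_J_transpose (C : Matrix (Fin N ⊕ Fin N) (Fin N ⊕ Fin N) ℝ) :
    J N * C * (J N)ᵀ =
      fromBlocks C.toBlocks₂₂ (-C.toBlocks₂₁) (-C.toBlocks₁₂) C.toBlocks₁₁ := by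
  nth_rewrite 1 [← fromBlocks_toBlocks C]
  simp [_root_.J, fromBlocks_transpose, fromBlocks_multiply]

lemma J_conj_J_conj (C : Matrix (Fin N ⊕ Fin N) (Fin N ⊕ Fin N) ℝ) :
    J N * (J N * C * (J N)ᵀ) * (J N)ᵀ = C := by
  calc J N * (J N * C * (J N)ᵀ) * (J N)ᵀ = (J N * J N) * C * (J N * J N) := by
        simp only [J_transpose_eq_neg, Matrix.mul_neg, Matrix.neg_mul, neg_neg, Matrix.mul_assoc]
    _ = C := by simp [J_mul_self]

lemma transpose_J_conj (C : Matrix (Fin N ⊕ Fin N) (Fin N ⊕ Fin N) ℝ) :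
    (J N * C * (J N)ᵀ)ᵀ = J N * Cᵀ * (J N)ᵀ := by
  simp only [transpose_mul, transpose_transpose, Matrix.mul_assoc]

end J

lemma blockForm.mul_J_comm {N : ℕ} {G : Matrix (Fin N ⊕ Fin N) (Fin N ⊕ Fin N) ℝ}
    (hG : blockForm G) : G * J N = J N * G := by
  obtain ⟨G₁, G₂, rfl⟩ := hG
  simp [_root_.J, fromBlocks_multiply]

section Parts

variable {N : ℕ} (C : Matrix (Fin N ⊕ Fin N) (Fin N ⊕ Fin N) ℝ)

lemma dotPart_eq_half_add : dotPart C = (1/2 : ℝ) • (C + J N * C * (J N)ᵀ) := by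
  rw [J_mul_mul_J_transpose]
  nth_rewrite 2 [← fromBlocks_toBlocks C]
  rw [fromBlocks_add, dotPart, sub_eq_add_neg, sub_eq_add_neg, add_comm C.toBlocks₂₂]

lemma ddotPart_eq_half_sub : ddotPart C = (1/2 : ℝ) • (C - J N * C * (J N)ᵀ) := by
  rw [ddotPart, dotPart_eq_half_add]
  module

lemma blockForm_dotPart : blockForm (dotPart C) := by
  refine ⟨(1/2 : ℝ) • (C.toBlocks₁₁ + C.toBlocks₂₂),
    (1/2 : ℝ) • (C.toBlocks₂₁ - C.toBlocks₁₂), ?_⟩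
  rw [dotPart, fromBlocks_smul, smul_sub, smul_sub, neg_sub]

lemma dotPart_mul_J_comm : dotPart C * J N = J N * dotPart C :=
  (blockForm_dotPart C).mul_J_comm

lemma J_mul_ddotPart_mul_J_transpose : J N * ddotPart C * (J N)ᵀ = -ddotPart C := by
  rw [ddotPart_eq_half_sub, Matrix.mul_smul, Matrix.smul_mul, Matrix.mul_sub, Matrix.sub_mul,
    J_conj_J_conj, ← smul_neg, neg_sub]

variable {C}

lemma dotPart_transpose (hC : Cᵀ = C) : (dotPart C)ᵀ = dotPart C := by
  rw [dotPart_eq_half_add, transpose_smul, transpose_add, transpose_J_conj, hC]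

lemma ddotPart_transpose (hC : Cᵀ = C) : (ddotPart C)ᵀ = ddotPart C := by
  rw [ddotPart, transpose_sub, hC, dotPart_transpose hC]

lemma posDef_dotPart (hC : C.PosDef) : (dotPart C).PosDef := by
  have hJ : (J N * C * (J N)ᵀ).PosSemidef := by
    simpa [conjTranspose_eq_transpose_of_trivial] using
      hC.posSemidef.mul_mul_conjTranspose_same (J N)
  rw [dotPart_eq_half_add]
  exact (hC.add_posSemidef hJ).smul (by norm_num)

end Parts

theorem statement1_general (N : ℕ)
    (C : Matrix (Fin N ⊕ Fin N) (Fin N ⊕ Fin N) ℝ) (hC : C.PosDef) :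
    (dotPart C).PosDef ∧ (dotPart C)ᵀ = dotPart C ∧
    dotPart C * J N = J N * dotPart C ∧
    (blockForm (dotPart C) ∧ IsUnit (dotPart C)) ∧
    (ddotPart C)ᵀ = ddotPart C ∧ J N * ddotPart C * (J N)ᵀ = -(ddotPart C) := by
  have hsymm : Cᵀ = C := by
    simpa [conjTranspose_eq_transpose_of_trivial] using hC.isHermitian.eq
  have hdot := posDef_dotPart hC
  exact ⟨hdot, dotPart_transpose hsymm, dotPart_mul_J_comm C,
    ⟨blockForm_dotPart C, hdot.isUnit⟩, ddotPart_transpose hsymm,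
    J_mul_ddotPart_mul_J_transpose C⟩

theorem statement1 (N : ℕ) (hN : 1 ≤ N)
    (C : Matrix (Fin N ⊕ Fin N) (Fin N ⊕ Fin N) ℝ) (hC : C.PosDef) :
    (dotPart C).PosDef ∧ (dotPart C)ᵀ = dotPart C ∧
    dotPart C * J N = J N * dotPart C ∧
    (blockForm (dotPart C) ∧ IsUnit (dotPart C)) ∧
    (ddotPart C)ᵀ = ddotPart C ∧ J N * ddotPart C * (J N)ᵀ = -(ddotPart C) :=
  statement1_general N C hC
end

section
/- Let C be a real symmetric positive definite 2N×2N matrix and let G ∈ 𝒢. Then the decomposition into proper and improper parts is equivariant under the action of 𝒢: (G C Gᵀ)˙ = G Ċ Gᵀ and (G C Gᵀ)¨ = G C̈ Gᵀ. -/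
open Matrix Polynomial

lemma dot_equivariant {N : ℕ} (C G : Matrix (Fin N ⊕ Fin N) (Fin N ⊕ Fin N) ℝ)
    (hG : blockForm G) : dotPart (G * C * Gᵀ) = G * dotPart C * Gᵀ := by
  obtain ⟨G₁, G₂, rfl⟩ := hG
  set A := C.toBlocks₁₁
  set B := C.toBlocks₁₂
  set B' := C.toBlocks₂₁
  set D := C.toBlocks₂₂
  have hC : C = Matrix.fromBlocks A B B' D := (Matrix.fromBlocks_toBlocks C).symm
  rw [hC]
  unfold dotPart
  rw [Matrix.mul_smul, Matrix.smul_mul]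
  congr 1
  simp only [Matrix.fromBlocks_transpose, Matrix.fromBlocks_multiply,
    Matrix.toBlocks_fromBlocks₁₁, Matrix.toBlocks_fromBlocks₁₂,
    Matrix.toBlocks_fromBlocks₂₁, Matrix.toBlocks_fromBlocks₂₂,
    Matrix.transpose_neg]
  rw [Matrix.fromBlocks_inj]
  refine ⟨?_, ?_, ?_, ?_⟩ <;> noncomm_ring

theorem statement2 (N : ℕ) (hN : 1 ≤ N) (C G : Matrix (Fin N ⊕ Fin N) (Fin N ⊕ Fin N) ℝ)
    (hC : C.PosDef) (hG : blockForm G) (hGu : IsUnit G) :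
    dotPart (G * C * Gᵀ) = G * dotPart C * Gᵀ ∧
    ddotPart (G * C * Gᵀ) = G * ddotPart C * Gᵀ := by
  have h := dot_equivariant C G hG
  refine ⟨h, ?_⟩
  unfold ddotPart
  rw [h, Matrix.mul_sub, Matrix.sub_mul]
end

section
/- Let C be a real symmetric positive definite 2N×2N matrix and let G ∈ 𝒢. Then Γ(G C Gᵀ) and Γ(C) have the same characteristic polynomial; in particular the eigenvalues of Γ(C) are invariant under the group action (G, C) ↦ G C Gᵀ of 𝒢. -/
open Matrix Polynomial

/-- `Γ(C) = Ċ^{-1/2} C̈ Ċ^{-1/2}`, where `Ċ^{1/2}` is the (unique) positive semidefinite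
(hence, as `Ċ` is positive definite, the unique symmetric positive definite) square root
of `Ċ`, given a proof `h` that `Ċ` is positive definite. -/
noncomputable def Gamma {N : ℕ} (C : Matrix (Fin N ⊕ Fin N) (Fin N ⊕ Fin N) ℝ)
    (h : (dotPart C).PosDef) : Matrix (Fin N ⊕ Fin N) (Fin N ⊕ Fin N) ℝ :=
  ((h.posSemidef.1.eigenvectorUnitary : Matrix (Fin N ⊕ Fin N) (Fin N ⊕ Fin N) ℝ) *
      diagonal (((↑) : ℝ → ℝ) ∘ Real.sqrt ∘ h.posSemidef.1.eigenvalues) *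
      (star h.posSemidef.1.eigenvectorUnitary : Matrix (Fin N ⊕ Fin N) (Fin N ⊕ Fin N) ℝ))⁻¹ *
    ddotPart C *
    ((h.posSemidef.1.eigenvectorUnitary : Matrix (Fin N ⊕ Fin N) (Fin N ⊕ Fin N) ℝ) *
      diagonal (((↑) : ℝ → ℝ) ∘ Real.sqrt ∘ h.posSemidef.1.eigenvalues) *
      (star h.posSemidef.1.eigenvectorUnitary : Matrix (Fin N ⊕ Fin N) (Fin N ⊕ Fin N) ℝ))⁻¹

/-! With `J = [[0, -1], [1, 0]]` one has `Ċ = (C - J C J) / 2`, and the matrices of `𝒢` are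
exactly those commuting with `J`; hence `C ↦ G C Gᵀ` acts on `Ċ` and `C̈` separately by the same
congruence. Since `charpoly (X Y) = charpoly (Y X)`, `Γ(C) = Ċ^{-1/2} C̈ Ċ^{-1/2}` has the
characteristic polynomial of `C̈ Ċ⁻¹`, and the congruence by `G` turns `C̈ Ċ⁻¹` into its
conjugate `G (C̈ Ċ⁻¹) G⁻¹`. -/

open scoped MatrixOrder in
lemma Matrix.PosSemidef.cfc_sqrt_mul_self {n : Type*} [Fintype n] [DecidableEq n]
    {A : Matrix n n ℝ} (hA : A.PosSemidef) : cfc Real.sqrt A * cfc Real.sqrt A = A := by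
  rw [← cfc_mul _ _ A]
  conv_rhs => rw [← cfc_id' ℝ A hA.1]
  exact cfc_congr fun x hx => Real.mul_self_sqrt (spectrum_nonneg_of_nonneg hA.nonneg hx)

lemma Matrix.charpoly_inv_mul_mul_inv_of_mul_self {n R : Type*} [Fintype n] [DecidableEq n]
    [CommRing R] {S A : Matrix n n R} (hS : S * S = A) (B : Matrix n n R) :
    (S⁻¹ * B * S⁻¹).charpoly = (B * A⁻¹).charpoly := by
  rw [charpoly_mul_comm, ← mul_assoc, charpoly_mul_comm, ← Matrix.mul_inv_rev, hS]

section BlockMatrices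

variable {N : ℕ}

lemma Gamma_eq_cfc_sqrt (C : Matrix (Fin N ⊕ Fin N) (Fin N ⊕ Fin N) ℝ) (h : (dotPart C).PosDef) :
    Gamma C h = (cfc Real.sqrt (dotPart C))⁻¹ * ddotPart C * (cfc Real.sqrt (dotPart C))⁻¹ := by
  rw [Gamma, h.posSemidef.1.cfc_eq, IsHermitian.cfc, Unitary.conjStarAlgAut_apply]
  rfl

lemma charpoly_Gamma (C : Matrix (Fin N ⊕ Fin N) (Fin N ⊕ Fin N) ℝ) (h : (dotPart C).PosDef) :
    (Gamma C h).charpoly = (ddotPart C * (dotPart C)⁻¹).charpoly := by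
  rw [Gamma_eq_cfc_sqrt]
  exact charpoly_inv_mul_mul_inv_of_mul_self h.posSemidef.cfc_sqrt_mul_self _

/-- Multiplication by `i` on `ℂᴺ ≅ ℝᴺ × ℝᴺ`. -/
def complexStructure (N : ℕ) : Matrix (Fin N ⊕ Fin N) (Fin N ⊕ Fin N) ℝ :=
  fromBlocks 0 (-1) 1 0

lemma transpose_complexStructure : (complexStructure N)ᵀ = -complexStructure N := by
  simp [complexStructure, fromBlocks_transpose, fromBlocks_neg]

lemma dotPart_eq_half_smul (C : Matrix (Fin N ⊕ Fin N) (Fin N ⊕ Fin N) ℝ) :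
    dotPart C = (1/2 : ℝ) • (C - complexStructure N * C * complexStructure N) := by
  conv_rhs => rw [← fromBlocks_toBlocks C]
  ext (i | i) (j | j) <;>
    simp [dotPart, complexStructure, fromBlocks_multiply, toBlocks₁₁, toBlocks₁₂, toBlocks₂₁,
      toBlocks₂₂]
  all_goals ring

lemma blockForm.commute_complexStructure {G : Matrix (Fin N ⊕ Fin N) (Fin N ⊕ Fin N) ℝ}
    (hG : blockForm G) : Commute G (complexStructure N) := by
  obtain ⟨G₁, G₂, rfl⟩ := hG
  simp [Commute, SemiconjBy, complexStructure, fromBlocks_multiply]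

lemma Commute.transpose_complexStructure {G : Matrix (Fin N ⊕ Fin N) (Fin N ⊕ Fin N) ℝ}
    (hG : Commute G (complexStructure N)) : Commute Gᵀ (complexStructure N) := by
  have h := congrArg transpose hG.eq
  simp only [transpose_mul, _root_.transpose_complexStructure, Matrix.neg_mul,
    Matrix.mul_neg, neg_inj] at h
  exact h.symm

variable {G : Matrix (Fin N ⊕ Fin N) (Fin N ⊕ Fin N) ℝ}
  (C : Matrix (Fin N ⊕ Fin N) (Fin N ⊕ Fin N) ℝ)

lemma dotPart_mul_mul_transpose (hG : Commute G (complexStructure N)) :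
    dotPart (G * C * Gᵀ) = G * dotPart C * Gᵀ := by
  have hJ : complexStructure N * (G * C * Gᵀ) * complexStructure N
      = G * (complexStructure N * C * complexStructure N) * Gᵀ := by
    rw [← mul_assoc, ← mul_assoc, ← hG.eq, mul_assoc _ Gᵀ, hG.transpose_complexStructure.eq]
    simp only [mul_assoc]
  rw [dotPart_eq_half_smul, dotPart_eq_half_smul, hJ, Matrix.mul_smul, Matrix.smul_mul,
    Matrix.mul_sub, Matrix.sub_mul]

lemma ddotPart_mul_mul_transpose (hG : Commute G (complexStructure N)) :
    ddotPart (G * C * Gᵀ) = G * ddotPart C * Gᵀ := by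
  rw [ddotPart, ddotPart, dotPart_mul_mul_transpose C hG, Matrix.mul_sub, Matrix.sub_mul]

lemma ddotPart_mul_inv_dotPart_mul_mul_transpose (hG : Commute G (complexStructure N))
    (hGu : IsUnit G) :
    ddotPart (G * C * Gᵀ) * (dotPart (G * C * Gᵀ))⁻¹
      = G * (ddotPart C * (dotPart C)⁻¹) * G⁻¹ := by
  have hGt : Gᵀ * Gᵀ⁻¹ = 1 :=
    mul_nonsing_inv _ (by rwa [det_transpose, ← isUnit_iff_isUnit_det])
  rw [ddotPart_mul_mul_transpose C hG, dotPart_mul_mul_transpose C hG, Matrix.mul_inv_rev,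
    Matrix.mul_inv_rev]
  calc G * ddotPart C * Gᵀ * (Gᵀ⁻¹ * ((dotPart C)⁻¹ * G⁻¹))
      = G * ddotPart C * (Gᵀ * Gᵀ⁻¹) * (dotPart C)⁻¹ * G⁻¹ := by simp only [mul_assoc]
    _ = G * (ddotPart C * (dotPart C)⁻¹) * G⁻¹ := by rw [hGt, mul_one]; simp only [mul_assoc]

end BlockMatrices

theorem statement3_general (N : ℕ) (C G : Matrix (Fin N ⊕ Fin N) (Fin N ⊕ Fin N) ℝ)
    (hG : blockForm G) (hGu : IsUnit G)
    (hd : (dotPart C).PosDef) (hd' : (dotPart (G * C * Gᵀ)).PosDef) :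
    (Gamma (G * C * Gᵀ) hd').charpoly = (Gamma C hd).charpoly := by
  rw [charpoly_Gamma, charpoly_Gamma,
    ddotPart_mul_inv_dotPart_mul_mul_transpose C hG.commute_complexStructure hGu]
  exact charpoly_units_conj hGu.unit _

theorem statement3 (N : ℕ) (hN : 1 ≤ N) (C G : Matrix (Fin N ⊕ Fin N) (Fin N ⊕ Fin N) ℝ)
    (hC : C.PosDef) (hG : blockForm G) (hGu : IsUnit G)
    (hd : (dotPart C).PosDef) (hd' : (dotPart (G * C * Gᵀ)).PosDef) :
    (Gamma (G * C * Gᵀ) hd').charpoly = (Gamma C hd).charpoly :=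
  statement3_general N C G hG hGu hd hd'
end

section
/- For every real γ ≥ 2, the function f is a probability density on (0, c): it is nonnegative there and ∫₀^c f(r) dr = 1. -/
/-!
On `(0, c)` the density factors as `γ / (2π) · √(c - r) / ((1 - r) √r)`. The last function has the
explicit primitive `arcsin ((2r - c) / c) + √(1 - c) · arcsin ((c - (2 - c) r) / (c (1 - r)))`,
which runs from `-(π/2)(1 - √(1 - c))` at `0` to `(π/2)(1 - √(1 - c))` at `c`; integrability
of the integrand near its endpoint singularities comes for free because it is nonnegative. Finally `1 - c = ((γ - 2) / γ)²`, so
for `γ ≥ 2` the total mass is `γ / (2π) · π · 2 / γ = 1`.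
-/

open Real Set intervalIntegral

theorem HasDerivAt.arcsin_of_one_sub_sq_eq {f : ℝ → ℝ} {f' w x : ℝ} (hf : HasDerivAt f f' x)
    (hw : 0 < w) (hsq : 1 - f x ^ 2 = w ^ 2) :
    HasDerivAt (fun y => arcsin (f y)) (f' / w) x := by
  have hlt : f x ^ 2 < 1 := by nlinarith
  have hne₁ : f x ≠ -1 := by rintro h; norm_num [h] at hlt
  have hne₂ : f x ≠ 1 := by rintro h; norm_num [h] at hlt
  have := (hasDerivAt_arcsin hne₁ hne₂).comp x hf
  rwa [hsq, sqrt_sq hw.le, one_div, inv_mul_eq_div] at this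

/-- For `c = 1` the second summand vanishes identically, despite the pole of its argument at
`r = 1 = c`. -/
noncomputable def arcsinPrimitive (c r : ℝ) : ℝ :=
  arcsin ((2 * r - c) / c) + √(1 - c) * arcsin ((c - (2 - c) * r) / (c * (1 - r)))

section
variable {c r : ℝ}

theorem hasDerivAt_arcsin_two_mul_sub_div (hr : r ∈ Ioo 0 c) :
    HasDerivAt (fun r => arcsin ((2 * r - c) / c)) (1 / (√r * √(c - r))) r := by
  obtain ⟨hr0, hrc⟩ := hr
  have hc : 0 < c := hr0.trans hrc
  have hu : HasDerivAt (fun r => (2 * r - c) / c) (2 / c) r := by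
    simpa using (((hasDerivAt_id r).const_mul 2).sub_const c).div_const c
  refine (hu.arcsin_of_one_sub_sq_eq (w := 2 * √r * √(c - r) / c) (by positivity) ?_).congr_deriv
    ?_
  · field_simp
    rw [sq_sqrt hr0.le, sq_sqrt (by linarith)]
    ring
  · field_simp

theorem hasDerivAt_sqrt_one_sub_mul_arcsin (hc : c ≤ 1) (hr : r ∈ Ioo 0 c) :
    HasDerivAt (fun r => √(1 - c) * arcsin ((c - (2 - c) * r) / (c * (1 - r))))
      (-((1 - c) / ((1 - r) * (√r * √(c - r))))) r := by
  obtain ⟨hr0, hrc⟩ := hr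
  rcases hc.eq_or_lt with rfl | hc1
  · simpa using hasDerivAt_const r (0 : ℝ)
  have hc0 : c ≠ 0 := (hr0.trans hrc).ne'
  have h1r : 1 - r ≠ 0 := by linarith
  have hu : HasDerivAt (fun r => (c - (2 - c) * r) / (c * (1 - r)))
      (-(2 * (1 - c)) / (c * (1 - r) ^ 2)) r := by
    refine ((((hasDerivAt_id r).const_mul (2 - c)).const_sub c).div
      (((hasDerivAt_id r).const_sub 1).const_mul c) (mul_ne_zero hc0 h1r)).congr_deriv ?_
    simp only [id_eq]
    field_simp
    ring
  have hs : √(1 - c) ^ 2 = 1 - c := sq_sqrt (by linarith)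
  refine ((hu.arcsin_of_one_sub_sq_eq (w := 2 * √(1 - c) * √r * √(c - r) / (c * (1 - r)))
    (div_pos (by positivity) (mul_pos (hr0.trans hrc) (by linarith))) ?_).const_mul
    √(1 - c)).congr_deriv ?_
  · field_simp
    rw [hs, sq_sqrt hr0.le, sq_sqrt (by linarith)]
    ring
  · field_simp

theorem hasDerivAt_arcsinPrimitive (hc : c ≤ 1) (hr : r ∈ Ioo 0 c) :
    HasDerivAt (arcsinPrimitive c) (√(c - r) / ((1 - r) * √r)) r := by
  have h1r : 1 - r ≠ 0 := by linarith [hr.2]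
  have hsr : √r ≠ 0 := (sqrt_pos.2 hr.1).ne'
  have hscr : √(c - r) ≠ 0 := (sqrt_pos.2 (by linarith [hr.2])).ne'
  have hcr : √(c - r) ^ 2 = c - r := sq_sqrt (by linarith [hr.2])
  refine ((hasDerivAt_arcsin_two_mul_sub_div hr).add
    (hasDerivAt_sqrt_one_sub_mul_arcsin hc hr)).congr_deriv ?_
  field_simp
  linear_combination -hcr

theorem continuousOn_arcsinPrimitive (hc0 : 0 < c) (hc : c ≤ 1) :
    ContinuousOn (arcsinPrimitive c) (Icc 0 c) := by
  unfold arcsinPrimitive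
  refine (continuous_arcsin.comp_continuousOn (by fun_prop)).add ?_
  rcases hc.eq_or_lt with rfl | hc1
  · simpa using continuousOn_const
  refine continuousOn_const.mul (continuous_arcsin.comp_continuousOn ?_)
  refine ContinuousOn.div (by fun_prop) (by fun_prop) fun r hr => ?_
  exact (mul_pos hc0 (by linarith [hr.2])).ne'

theorem arcsinPrimitive_zero (hc0 : 0 < c) :
    arcsinPrimitive c 0 = -(π / 2) + √(1 - c) * (π / 2) := by
  simp [arcsinPrimitive, hc0.ne']

theorem arcsinPrimitive_self (hc0 : 0 < c) (hc : c ≤ 1) :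
    arcsinPrimitive c c = π / 2 - √(1 - c) * (π / 2) := by
  rcases hc.eq_or_lt with rfl | hc1
  · norm_num [arcsinPrimitive]
  have h₁ : (2 * c - c) / c = 1 := by field_simp; ring
  have h₂ : (c - (2 - c) * c) / (c * (1 - c)) = -1 := by
    field_simp [(by linarith : 1 - c ≠ 0)]
    ring
  simp only [arcsinPrimitive, h₁, h₂, arcsin_one, arcsin_neg]
  ring

theorem integral_sqrt_sub_div_one_sub_mul_sqrt (hc0 : 0 < c) (hc : c ≤ 1) :
    ∫ r in (0 : ℝ)..c, √(c - r) / ((1 - r) * √r) = π * (1 - √(1 - c)) := by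
  have hderiv : ∀ r ∈ Ioo 0 c, HasDerivAt (arcsinPrimitive c) (√(c - r) / ((1 - r) * √r)) r :=
    fun r hr => hasDerivAt_arcsinPrimitive hc hr
  have hnonneg : ∀ r ∈ Ioo 0 c, 0 ≤ √(c - r) / ((1 - r) * √r) := fun r hr =>
    div_nonneg (sqrt_nonneg _) (mul_nonneg (by linarith [hr.2]) (sqrt_nonneg _))
  have hcont := continuousOn_arcsinPrimitive hc0 hc
  rw [integral_eq_sub_of_hasDerivAt_of_le hc0.le hcont hderiv
    ((intervalIntegrable_iff_integrableOn_Ioc_of_le hc0.le).2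
      (integrableOn_deriv_of_nonneg hcont hderiv hnonneg)),
    arcsinPrimitive_self hc0 hc, arcsinPrimitive_zero hc0]
  ring

end

theorem sqrt_four_mul_div_sub_sq {γ r : ℝ} (hγ : 0 < γ) (hr : 0 < r) :
    √(4 * (γ - 1) * (1 - r) / r - (γ - 2) ^ 2) = γ * √(4 * (γ - 1) / γ ^ 2 - r) / √r := by
  have : 4 * (γ - 1) * (1 - r) / r - (γ - 2) ^ 2 = γ ^ 2 * ((4 * (γ - 1) / γ ^ 2 - r) / r) := by
    field_simp
    ring
  rw [this, sqrt_mul (sq_nonneg γ), sqrt_sq hγ.le, sqrt_div' _ hr.le]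
  ring

theorem statement11 (γ : ℝ) (hγ : 2 ≤ γ) :
    (∀ r ∈ Set.Ioo (0 : ℝ) (4 * (γ - 1) / γ ^ 2),
      0 ≤ (1 / (2 * π * (1 - r))) * Real.sqrt (4 * (γ - 1) * (1 - r) / r - (γ - 2) ^ 2)) ∧
    ∫ r in (0 : ℝ)..(4 * (γ - 1) / γ ^ 2),
      (1 / (2 * π * (1 - r))) * Real.sqrt (4 * (γ - 1) * (1 - r) / r - (γ - 2) ^ 2) = 1 := by
  have hγ0 : 0 < γ := by linarith
  set c := 4 * (γ - 1) / γ ^ 2 with hc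
  have hc0 : 0 < c := div_pos (by linarith) (by positivity)
  have hsqrt : √(1 - c) = (γ - 2) / γ := by
    rw [show 1 - c = ((γ - 2) / γ) ^ 2 by rw [hc]; field_simp; ring, sqrt_sq (by positivity)]
  have hc1 : c ≤ 1 := by
    rw [hc, div_le_one (by positivity)]
    nlinarith [sq_nonneg (γ - 2)]
  refine ⟨fun r hr => ?_, ?_⟩
  · have h1r : 0 ≤ 1 - r := by linarith [hr.2]
    exact mul_nonneg (one_div_nonneg.2 (by positivity)) (sqrt_nonneg _)
  calc ∫ r in (0 : ℝ)..c, 1 / (2 * π * (1 - r)) * √(4 * (γ - 1) * (1 - r) / r - (γ - 2) ^ 2)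
      = ∫ r in (0 : ℝ)..c, γ / (2 * π) * (√(c - r) / ((1 - r) * √r)) := by
        refine integral_congr_Ioo_of_le hc0.le fun r hr => ?_
        have h1r : 1 - r ≠ 0 := by linarith [hr.2]
        rw [sqrt_four_mul_div_sub_sq hγ0 hr.1, ← hc]
        field_simp
    _ = γ / (2 * π) * (π * (1 - √(1 - c))) := by
        rw [intervalIntegral.integral_const_mul, integral_sqrt_sub_div_one_sub_mul_sqrt hc0 hc1]
    _ = 1 := by
        rw [hsqrt]
        field_simp
        ring
end

section
/- Let γ > 2 and let (M_N) be a sequence of positive integers with M_N ≥ 2N + 2 and M_N/N → γ as N → ∞. Set γ_N = M_N/N, a_{N,n} = (M_N − N − n + 1)/2 for 1 ≤ n ≤ N, b_N = (N+1)/2, and m_N = M_N·[ log(γ_N/(γ_N−1)) + ((γ_N−2)/γ_N)·log((γ_N−2)/(γ_N−1)) ] + (1/2)·log(γ_N/(γ_N−2)). Then the mean of the log-GLRT statistic under the properness hypothesis satisfies Σ_{n=1}^N ( ψ(a_{N,n} + b_N) − ψ(a_{N,n}) ) − m_N → 0 as N → ∞. -/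
/-!
Reflecting `n ↦ N + 1 - n` in the second digamma term pairs `a_{N,n} + b_N` with `a_{N,N+1-n}`,
which differ by the integer `N + 1 - n`; the recurrence `ψ (x + 1) = ψ x + 1 / x` then turns the
mean into a double sum of terms `2 / d` with `d ≥ M - 2N + 1`. Replacing `2 / d` by
`log (d + 1) - log (d - 1)` costs `O(d⁻³)` per term, so `O(N² / (M - 2N)³) = O(1 / N)` in total,
and the logarithms telescope to `log Γ(M + 1) - log Γ(M - N + 1) - log Γ(M - N) + log Γ(M - 2N)`.
Writing `log Γ x = (x - 1/2) log x - x + R x`, the main terms add up to `m_N` exactly, and what is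
left is the second difference `R M - 2 R (M - N) + R (M - 2N)`, which tends to `0` because
`R m → log √(2π)` along the integers by Stirling's formula.
-/

open MeasureTheory Real Filter

/-- The digamma function: the derivative of `log Γ` on `(0, ∞)`. -/
noncomputable def digamma (x : ℝ) : ℝ :=
  deriv (fun y => Real.log (Real.Gamma y)) x

open Finset

lemma log_Gamma_add_one {x : ℝ} (hx : 0 < x) :
    log (Gamma (x + 1)) = log x + log (Gamma x) := by
  rw [Gamma_add_one hx.ne', log_mul hx.ne' (Gamma_pos_of_pos hx).ne']

lemma hasDerivAt_log_Gamma {x : ℝ} (hx : 0 < x) :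
    HasDerivAt (fun y => log (Gamma y)) (digamma x) x := by
  have hΓ : DifferentiableAt ℝ Gamma x :=
    differentiableAt_Gamma fun m => by linarith [(Nat.cast_nonneg m : (0 : ℝ) ≤ m)]
  exact (hΓ.log (Gamma_pos_of_pos hx).ne').hasDerivAt

lemma digamma_add_one {x : ℝ} (hx : 0 < x) : digamma (x + 1) = digamma x + 1 / x := by
  have hshift : HasDerivAt (fun y => log (Gamma (y + 1))) (digamma (x + 1)) x := by
    simpa using (hasDerivAt_log_Gamma (by linarith : 0 < x + 1)).comp_add_const x 1
  have hsplit : HasDerivAt (fun y => log y + log (Gamma y)) (1 / x + digamma x) x := by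
    simpa [one_div] using (hasDerivAt_log hx.ne').fun_add (hasDerivAt_log_Gamma hx)
  have heq : (fun y => log (Gamma (y + 1))) =ᶠ[nhds x] fun y => log y + log (Gamma y) := by
    filter_upwards [eventually_gt_nhds hx] with y hy using log_Gamma_add_one hy
  rw [hshift.unique (hsplit.congr_of_eventuallyEq heq), add_comm]

lemma digamma_add_nat {x : ℝ} (hx : 0 < x) (k : ℕ) :
    digamma (x + k) = digamma x + ∑ i ∈ range k, 1 / (x + i) := by
  induction k with
  | zero => simp
  | succ k ih =>
    rw [Nat.cast_succ, ← add_assoc, digamma_add_one (by positivity), ih, sum_range_succ,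
      add_assoc]

lemma sum_Icc_reflect {β : Type*} [AddCommMonoid β] (g : ℝ → β) (N : ℕ) :
    ∑ n ∈ Icc 1 N, g (N + 1 - n) = ∑ n ∈ Icc 1 N, g n := by
  refine sum_nbij' (fun n => N + 1 - n) (fun n => N + 1 - n) ?_ ?_ ?_ ?_ ?_ <;>
    intro n hn <;> simp only [mem_Icc] at hn ⊢ <;> try omega
  rw [Nat.cast_sub (by omega)]
  push_cast
  ring_nf

/-- `Σ_{n=1}^N (ψ(a_{N,n} + b_N) - ψ(a_{N,n}))` for `M_N = K`. -/
noncomputable def logGlrtMean (K : ℝ) (N : ℕ) : ℝ :=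
  ∑ n ∈ Icc 1 N, (digamma ((K - N - n + 1) / 2 + (N + 1) / 2) - digamma ((K - N - n + 1) / 2))

lemma logGlrtMean_eq_sum_sum {K : ℝ} {N : ℕ} (hK : 2 * N < K + 1) :
    logGlrtMean K N = ∑ n ∈ Icc 1 N, ∑ i ∈ range (N + 1 - n), 2 / (K - 2 * N + n + 2 * i) := by
  rw [logGlrtMean, sum_sub_distrib,
    ← sum_Icc_reflect (fun n => digamma ((K - N - n + 1) / 2)), ← sum_sub_distrib]
  refine sum_congr rfl fun n hn => ?_
  have hnN : n ≤ N + 1 := by simp only [mem_Icc] at hn; omega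
  have hx : 0 < (K - 2 * N + n) / 2 := by
    have : (1 : ℝ) ≤ n := by exact_mod_cast (mem_Icc.mp hn).1
    linarith
  have hshift := digamma_add_nat hx (N + 1 - n)
  rw [Nat.cast_sub hnN, Nat.cast_add_one] at hshift
  rw [show (K - N - n + 1) / 2 + (N + 1) / 2 = (K - 2 * N + n) / 2 + (N + 1 - n) by ring,
    show (K - N - (N + 1 - n) + 1) / 2 = (K - 2 * N + n) / 2 by ring, hshift, add_sub_cancel_left]
  refine sum_congr rfl fun i _ => ?_
  rw [show (K - 2 * N + n) / 2 + i = (K - 2 * N + n + 2 * i) / 2 by ring, one_div_div]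

lemma abs_log_one_add_sub_log_one_sub_sub_le {u : ℝ} (hu : |u| < 1) :
    |log (1 + u) - log (1 - u) - 2 * u| ≤ 2 * |u| ^ 3 / (1 - |u|) := by
  have hminus := abs_log_sub_add_sum_range_le hu 2
  have hplus := abs_log_sub_add_sum_range_le (by rwa [abs_neg] : |-u| < 1) 2
  simp only [sum_range_succ, sum_range_zero, abs_neg, sub_neg_eq_add] at hminus hplus
  norm_num at hminus hplus
  calc |log (1 + u) - log (1 - u) - 2 * u|
      = |(-u + u ^ 2 / 2 + log (1 + u)) - (u + u ^ 2 / 2 + log (1 - u))| := by ring_nf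
    _ ≤ _ := (abs_sub _ _).trans (by rw [mul_div_assoc]; linarith)

lemma abs_log_add_one_sub_log_sub_one_sub_le {d : ℝ} (hd : 2 ≤ d) :
    |log (d + 1) - log (d - 1) - 2 / d| ≤ 4 / d ^ 3 := by
  have hd0 : 0 < d := by linarith
  have hu : 0 < 1 / d ∧ 1 / d ≤ 1 / 2 := ⟨by positivity, one_div_le_one_div_of_le two_pos hd⟩
  have hlog : log (d + 1) - log (d - 1) = log (1 + 1 / d) - log (1 - 1 / d) := by
    rw [one_add_div hd0.ne', one_sub_div hd0.ne', log_div (by linarith) hd0.ne',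
      log_div (by linarith) hd0.ne']
    ring
  have h := abs_log_one_add_sub_log_one_sub_sub_le (u := 1 / d) (by rw [abs_of_pos hu.1]; linarith)
  rw [abs_of_pos hu.1, ← hlog, mul_one_div] at h
  refine h.trans ?_
  rw [div_le_iff₀ (by linarith), show 4 / d ^ 3 = 4 * (1 / d) ^ 3 by ring]
  nlinarith [pow_pos hu.1 3]

lemma sum_range_log_sub_log_eq (y : ℝ) (k : ℕ) :
    ∑ i ∈ range k, (log (y + 2 * i + 1) - log (y + 2 * i - 1))
      = log (y + 2 * k - 1) - log (y - 1) := by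
  convert sum_range_sub (fun i : ℕ => log (y + 2 * i - 1)) k using 2 with i
  · push_cast
    ring_nf
  · simp

lemma sum_Icc_log_sub_log_eq_sum_sum (K : ℝ) (N : ℕ) :
    ∑ n ∈ Icc 1 N, (log (K - n + 1) - log (K - 2 * N + n - 1))
      = ∑ n ∈ Icc 1 N, ∑ i ∈ range (N + 1 - n),
          (log (K - 2 * N + n + 2 * i + 1) - log (K - 2 * N + n + 2 * i - 1)) := by
  refine sum_congr rfl fun n hn => ?_
  rw [sum_range_log_sub_log_eq, Nat.cast_sub (by simp only [mem_Icc] at hn; omega)]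
  push_cast
  ring_nf

lemma abs_sum_sum_sub_sum_log_le {K : ℝ} {N : ℕ} (hK : 2 * N + 1 ≤ K) :
    |∑ n ∈ Icc 1 N, ∑ i ∈ range (N + 1 - n), 2 / (K - 2 * N + n + 2 * i)
      - ∑ n ∈ Icc 1 N, (log (K - n + 1) - log (K - 2 * N + n - 1))|
      ≤ 4 * N ^ 2 / (K - 2 * N + 1) ^ 3 := by
  rw [sum_Icc_log_sub_log_eq_sum_sum, ← sum_sub_distrib]
  refine (abs_sum_le_sum_abs _ _).trans ?_
  refine (sum_le_card_nsmul _ _ (N * (4 / (K - 2 * N + 1) ^ 3)) fun n hn => ?_).trans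
    (le_of_eq (by rw [Nat.card_Icc, Nat.add_sub_cancel, nsmul_eq_mul]; ring))
  rw [mem_Icc] at hn
  rw [← sum_sub_distrib]
  refine (abs_sum_le_sum_abs _ _).trans ?_
  refine (sum_le_card_nsmul _ _ (4 / (K - 2 * N + 1) ^ 3) fun i _ => ?_).trans ?_
  · have hn1 : (1 : ℝ) ≤ n := by exact_mod_cast hn.1
    have hd : K - 2 * N + 1 ≤ K - 2 * N + n + 2 * i := by
      linarith [(i.cast_nonneg : (0 : ℝ) ≤ i)]
    rw [abs_sub_comm]
    refine (abs_log_add_one_sub_log_sub_one_sub_le (by linarith)).trans ?_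
    exact div_le_div_of_nonneg_left (by norm_num) (pow_pos (by linarith) 3)
      (pow_le_pow_left₀ (by linarith) hd 3)
  · rw [nsmul_eq_mul, card_range]
    gcongr
    · have : (0 : ℝ) < K - 2 * N + 1 := by linarith
      positivity
    · omega

lemma sum_Icc_log_sub_add_one {K : ℝ} {N : ℕ} (hN : (N : ℝ) < K + 1) :
    ∑ n ∈ Icc 1 N, log (K - n + 1) = log (Gamma (K + 1)) - log (Gamma (K - N + 1)) := by
  induction N with
  | zero => simp
  | succ N ih =>
    push_cast at hN
    rw [sum_Icc_succ_top (by omega), ih (by linarith),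
      log_Gamma_add_one (x := K - N) (by linarith)]
    push_cast
    ring_nf

lemma sum_Icc_log_add_sub_one {y : ℝ} (hy : 0 < y) (N : ℕ) :
    ∑ n ∈ Icc 1 N, log (y + n - 1) = log (Gamma (y + N)) - log (Gamma y) := by
  induction N with
  | zero => simp
  | succ N ih =>
    rw [sum_Icc_succ_top (by omega), ih, Nat.cast_succ, ← add_assoc,
      log_Gamma_add_one (by positivity)]
    ring_nf

noncomputable def stirlingRemainder (x : ℝ) : ℝ := log (Gamma x) - ((x - 1 / 2) * log x - x)

lemma stirlingRemainder_natCast {m : ℕ} (hm : m ≠ 0) :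
    stirlingRemainder m = log (Stirling.stirlingSeq m) + log 2 / 2 := by
  have hm0 : (0 : ℝ) < m := by positivity
  have hfact : log (Gamma m) = log m.factorial - log m := by
    rw [← Gamma_nat_eq_factorial, log_Gamma_add_one hm0]
    ring
  rw [stirlingRemainder, Stirling.log_stirlingSeq_formula, hfact, log_mul two_ne_zero hm0.ne',
    log_div hm0.ne' (exp_ne_zero 1), log_exp]
  ring

lemma tendsto_stirlingRemainder_natCast :
    Tendsto (fun m : ℕ => stirlingRemainder m) atTop (nhds (log (2 * π) / 2)) := by
  have hlim : log (2 * π) / 2 = log √π + log 2 / 2 := by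
    rw [log_sqrt pi_pos.le, log_mul two_ne_zero pi_ne_zero]
    ring
  rw [hlim]
  refine (((continuousAt_log (sqrt_pos.mpr pi_pos).ne').tendsto.comp
    Stirling.tendsto_stirlingSeq_sqrt_pi).add_const _).congr' ?_
  filter_upwards [eventually_ne_atTop 0] with m hm
  exact (stirlingRemainder_natCast hm).symm

lemma tendsto_stirlingRemainder_of_natCast {k : ℕ → ℕ} (hk : Tendsto k atTop atTop)
    {x : ℕ → ℝ} (hx : ∀ᶠ N in atTop, (k N : ℝ) = x N) :
    Tendsto (fun N => stirlingRemainder (x N)) atTop (nhds (log (2 * π) / 2)) :=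
  (tendsto_stirlingRemainder_natCast.comp hk).congr' (hx.mono fun N hN => by simp [hN])

lemma tendsto_stirlingRemainder_second_diff {M : ℕ → ℕ} {q : ℝ} (hq : 0 < q)
    (hgap : ∀ᶠ N : ℕ in atTop, q * N ≤ (M N : ℝ) - 2 * N) :
    Tendsto (fun N : ℕ => stirlingRemainder (M N) - 2 * stirlingRemainder ((M N : ℝ) - N)
      + stirlingRemainder ((M N : ℝ) - 2 * N)) atTop (nhds 0) := by
  have hcast : ∀ᶠ N : ℕ in atTop, ((M N - 2 * N : ℕ) : ℝ) = M N - 2 * N ∧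
      ((M N - N : ℕ) : ℝ) = M N - N := by
    filter_upwards [hgap] with N hN
    have : 2 * N ≤ M N := by
      exact_mod_cast (by push_cast; nlinarith [(N.cast_nonneg : (0 : ℝ) ≤ N)] :
        ((2 * N : ℕ) : ℝ) ≤ M N)
    constructor <;> push_cast [Nat.cast_sub this, Nat.cast_sub (by omega : N ≤ M N)] <;> ring
  have hc : Tendsto (fun N => M N - 2 * N) atTop atTop := by
    refine tendsto_natCast_atTop_iff.mp (tendsto_atTop_mono' _ ?_
      (tendsto_natCast_atTop_atTop.const_mul_atTop hq))
    filter_upwards [hgap, hcast] with N hN ⟨hcN, _⟩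
    rwa [hcN]
  have h0 := tendsto_stirlingRemainder_of_natCast (x := fun N => (M N : ℝ))
    (tendsto_atTop_mono (fun N => Nat.sub_le _ (2 * N)) hc) (Eventually.of_forall fun N => rfl)
  have h1 := tendsto_stirlingRemainder_of_natCast (k := fun N => M N - N)
    (tendsto_atTop_mono (fun N => by omega) hc) (hcast.mono fun N h => h.2)
  have h2 := tendsto_stirlingRemainder_of_natCast hc (hcast.mono fun N h => h.1)
  convert (h0.sub (h1.const_mul 2)).add h2 using 2
  ring

/-- `m_N` for `M_N = M` and `γ_N = γ`. -/
noncomputable def logGlrtMeanApprox (M γ : ℝ) : ℝ :=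
  M * (log (γ / (γ - 1)) + ((γ - 2) / γ) * log ((γ - 2) / (γ - 1))) + 1 / 2 * log (γ / (γ - 2))

lemma logGlrtMeanApprox_div {K L : ℝ} (hL : 0 < L) (hK : 2 * L < K) :
    logGlrtMeanApprox K (K / L) = (K + 1 / 2) * log K - 2 * (K - L) * log (K - L)
      + (K - 2 * L - 1 / 2) * log (K - 2 * L) := by
  have hK0 : 0 < K := by linarith
  have hKL : 0 < K - L := by linarith
  have hK2L : 0 < K - 2 * L := by linarith
  have h1 : K / L / (K / L - 1) = K / (K - L) := by field_simp
  have h2 : (K / L - 2) / (K / L - 1) = (K - 2 * L) / (K - L) := by field_simp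
  have h3 : K / L / (K / L - 2) = K / (K - 2 * L) := by field_simp
  have h4 : (K / L - 2) / (K / L) = (K - 2 * L) / K := by field_simp
  rw [logGlrtMeanApprox, h1, h2, h3, h4, log_div hK0.ne' hKL.ne', log_div hK2L.ne' hKL.ne',
    log_div hK0.ne' hK2L.ne']
  field_simp
  ring

lemma abs_logGlrtMean_sub_logGlrtMeanApprox_sub_le {K : ℝ} {N : ℕ} (hN : 0 < N)
    (hK : 2 * N + 1 ≤ K) :
    |logGlrtMean K N - logGlrtMeanApprox K (K / N)
        - (stirlingRemainder K - 2 * stirlingRemainder (K - N) + stirlingRemainder (K - 2 * N))|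
      ≤ 4 * N ^ 2 / (K - 2 * N + 1) ^ 3 := by
  have hN0 : (0 : ℝ) < N := by exact_mod_cast hN
  have hlog : ∑ n ∈ Icc 1 N, (log (K - n + 1) - log (K - 2 * N + n - 1))
      = logGlrtMeanApprox K (K / N) + (stirlingRemainder K - 2 * stirlingRemainder (K - N)
        + stirlingRemainder (K - 2 * N)) := by
    rw [sum_sub_distrib, sum_Icc_log_sub_add_one (by linarith),
      sum_Icc_log_add_sub_one (by linarith), logGlrtMeanApprox_div hN0 (by linarith),
      log_Gamma_add_one (by linarith), show K - N + 1 = (K - N) + 1 by ring,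
      log_Gamma_add_one (by linarith), show K - 2 * N + N = K - N by ring]
    simp only [stirlingRemainder]
    ring
  rw [sub_sub, ← hlog, logGlrtMean_eq_sum_sum (by linarith)]
  exact abs_sum_sum_sub_sum_log_le hK

lemma eventually_mul_le_sub_two_mul {γ : ℝ} (hγ : 2 < γ) {K : ℕ → ℝ}
    (hlim : Tendsto (fun N : ℕ => K N / N) atTop (nhds γ)) :
    ∀ᶠ N : ℕ in atTop, (γ - 2) / 2 * N ≤ K N - 2 * N := by
  filter_upwards [hlim.eventually (eventually_gt_nhds (by linarith : (γ + 2) / 2 < γ)),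
    eventually_gt_atTop 0] with N hN hN0
  rw [lt_div_iff₀ (by exact_mod_cast hN0)] at hN
  linarith

lemma tendsto_mul_sq_div_pow_three_of_mul_le {C q : ℝ} (hC : 0 ≤ C) (hq : 0 < q) {c : ℕ → ℝ}
    (hc : ∀ᶠ N : ℕ in atTop, q * N ≤ c N) :
    Tendsto (fun N : ℕ => C * (N : ℝ) ^ 2 / (c N + 1) ^ 3) atTop (nhds 0) := by
  refine squeeze_zero' ?_ ?_ (tendsto_const_div_atTop_nhds_zero_nat (C / q ^ 3))
  · filter_upwards [hc] with N hN
    have : 0 < c N + 1 := by nlinarith [(N.cast_nonneg : (0 : ℝ) ≤ N)]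
    positivity
  · filter_upwards [hc, eventually_gt_atTop 0] with N hN hN0
    have hqN : 0 < q * N := by positivity
    calc C * (N : ℝ) ^ 2 / (c N + 1) ^ 3 ≤ C * N ^ 2 / (q * N) ^ 3 := by
          gcongr
          linarith
      _ = C / q ^ 3 / N := by field_simp

theorem statement15_general (γ : ℝ) (hγ : 2 < γ) (M : ℕ → ℕ)
    (hlim : Tendsto (fun N : ℕ => (M N : ℝ) / N) atTop (nhds γ)) :
    Tendsto (fun N : ℕ =>
      (∑ n ∈ Finset.Icc 1 N,
        (digamma (((M N : ℝ) - N - n + 1) / 2 + ((N : ℝ) + 1) / 2)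
          - digamma (((M N : ℝ) - N - n + 1) / 2)))
      - ((M N : ℝ) *
          (Real.log (((M N : ℝ) / N) / ((M N : ℝ) / N - 1))
            + (((M N : ℝ) / N - 2) / ((M N : ℝ) / N)) *
              Real.log (((M N : ℝ) / N - 2) / ((M N : ℝ) / N - 1)))
        + (1 / 2) * Real.log (((M N : ℝ) / N) / ((M N : ℝ) / N - 2))))
      atTop (nhds 0) := by
  change Tendsto (fun N => logGlrtMean (M N) N - logGlrtMeanApprox (M N) (M N / N)) atTop (nhds 0)
  have hq : 0 < (γ - 2) / 2 := by linarith
  have hgap := eventually_mul_le_sub_two_mul hγ hlim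
  have hmain : Tendsto (fun N => logGlrtMean (M N) N - logGlrtMeanApprox (M N) (M N / N)
      - (stirlingRemainder (M N) - 2 * stirlingRemainder ((M N : ℝ) - N)
        + stirlingRemainder ((M N : ℝ) - 2 * N))) atTop (nhds 0) := by
    refine squeeze_zero_norm' ?_ (tendsto_mul_sq_div_pow_three_of_mul_le zero_le_four hq hgap)
    filter_upwards [hgap, eventually_gt_atTop 0,
      (tendsto_natCast_atTop_atTop.const_mul_atTop hq).eventually_ge_atTop 1] with N hN hN0 hqN
    exact abs_logGlrtMean_sub_logGlrtMeanApprox_sub_le hN0 (by linarith)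
  simpa using hmain.add (tendsto_stirlingRemainder_second_diff hq hgap)

theorem statement15 (γ : ℝ) (hγ : 2 < γ) (M : ℕ → ℕ)
    (hM : ∀ N : ℕ, 2 * N + 2 ≤ M N)
    (hlim : Tendsto (fun N : ℕ => (M N : ℝ) / N) atTop (nhds γ)) :
    Tendsto (fun N : ℕ =>
      (∑ n ∈ Finset.Icc 1 N,
        (digamma (((M N : ℝ) - N - n + 1) / 2 + ((N : ℝ) + 1) / 2)
          - digamma (((M N : ℝ) - N - n + 1) / 2)))
      - ((M N : ℝ) *
          (Real.log (((M N : ℝ) / N) / ((M N : ℝ) / N - 1))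
            + (((M N : ℝ) / N - 2) / ((M N : ℝ) / N)) *
              Real.log (((M N : ℝ) / N - 2) / ((M N : ℝ) / N - 1)))
        + (1 / 2) * Real.log (((M N : ℝ) / N) / ((M N : ℝ) / N - 2))))
      atTop (nhds 0) :=
  statement15_general γ hγ M hlim
end
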